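/- arXiv:2308.07584 — 4 statements merged into one kernel-verified Lean document; each statement's English description precedes it below -/
import Mathlib

section
/- For each λ₁>0, if (u,0) is a weak solution of the poly-Laplacian system (i.e. (u,0) is a critical point of φ), then ‖u‖_{W_0^{m₁,p}(Ω)} ≤ (λ₁ H₁ C_{m₁,p}(Ω)^{γ₁})^{1/(p−γ₁)}, where H₁ = max_{x∈Ω} h₁(x). Similarly, for each λ₂>0, if (0,v) is a weak solution of the system, then ‖v‖_{W_0^{m₂,q}(Ω)} ≤ (λ₂ H₂ C_{m₂,q}(Ω)^{γ₂})^{1/(q−γ₂)}, where H₂ = max_{x∈Ω} h₂(x). -/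
open Finset Filter

/-- A locally finite weighted graph `G = (V, E)`: each vertex has a finite set of
neighbours, symmetric positive edge weights `w`, and a vertex measure `mu`
uniformly bounded below by a positive constant. -/
structure GraphSetting (V : Type) where
  nbr : V → Finset V
  w : V → V → ℝ
  mu : V → ℝ
  nbr_symm : ∀ x y, y ∈ nbr x ↔ x ∈ nbr y
  nbr_irrefl : ∀ x, x ∉ nbr x
  w_symm : ∀ x y, w x y = w y x
  w_pos : ∀ x y, y ∈ nbr x → 0 < w x y
  mu_bound : ∃ μ₀ > 0, ∀ x, μ₀ ≤ mu x

/-- Membership in `W₀^{m,s}(Ω)`: `f` vanishes outside `Ω`. -/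
def suppIn {V : Type} (Ω : Finset V) (f : V → ℝ) : Prop := ∀ x, x ∉ Ω → f x = 0

namespace GraphSetting

variable {V : Type} [DecidableEq V] (G : GraphSetting V)

/-- `∫_A f dμ = ∑_{x ∈ A} f(x) μ(x)`. -/
noncomputable def integral (A : Finset V) (f : V → ℝ) : ℝ := ∑ x ∈ A, f x * G.mu x

/-- The graph Laplacian `Δf(x) = (1/μ(x)) ∑_{y ∼ x} ω_{xy} (f(y) - f(x))`. -/
noncomputable def lap (f : V → ℝ) (x : V) : ℝ :=
  (1 / G.mu x) * ∑ y ∈ G.nbr x, G.w x y * (f y - f x)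

/-- The gradient form `Γ(f,g)(x)`. -/
noncomputable def gammaForm (f g : V → ℝ) (x : V) : ℝ :=
  (1 / (2 * G.mu x)) * ∑ y ∈ G.nbr x, G.w x y * (f y - f x) * (g y - g x)

/-- `|∇f|(x) = Γ(f,f)(x)^{1/2}`. -/
noncomputable def gradLen (f : V → ℝ) (x : V) : ℝ := Real.sqrt (G.gammaForm f f x)

/-- `|∇^m f|`: `|∇ Δ^{(m-1)/2} f|` for odd `m`, `|Δ^{m/2} f|` for even `m`. -/
noncomputable def gradm (m : ℕ) (f : V → ℝ) (x : V) : ℝ :=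
  if m % 2 = 1 then G.gradLen (G.lap^[(m - 1) / 2] f) x else |(G.lap^[m / 2] f) x|

/-- The boundary `∂Ω = {y ∉ Ω | ∃ x ∈ Ω, xy ∈ E}`. -/
noncomputable def bdry (Ω : Finset V) : Finset V := Ω.biUnion G.nbr \ Ω

/-- The Sobolev norm `‖f‖_{W₀^{m,s}(Ω)} = (∫_{Ω ∪ ∂Ω} |∇^m f|^s dμ)^{1/s}`. -/
noncomputable def sobNorm (Ω bΩ : Finset V) (m : ℕ) (s : ℝ) (f : V → ℝ) : ℝ :=
  (∑ x ∈ Ω ∪ bΩ, G.gradm m f x ^ s * G.mu x) ^ (1 / s)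

/-- `‖f‖_{L^r(A)} = (∫_A |f|^r dμ)^{1/r}`. -/
noncomputable def lpNorm (A : Finset V) (r : ℝ) (f : V → ℝ) : ℝ :=
  (∑ x ∈ A, |f x| ^ r * G.mu x) ^ (1 / r)

/-- The weak form `B(u,φ) = ∫_Ω (£_{m,s} u) φ dμ` of the poly-Laplacian `£_{m,s}`. -/
noncomputable def bform (Ω bΩ : Finset V) (m : ℕ) (s : ℝ) (u φ : V → ℝ) : ℝ :=
  ∑ x ∈ Ω ∪ bΩ,
    G.gradm m u x ^ (s - 2) *
      (if m % 2 = 1 then G.gammaForm (G.lap^[(m - 1) / 2] u) (G.lap^[(m - 1) / 2] φ) x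
       else (G.lap^[m / 2] u) x * (G.lap^[m / 2] φ) x) * G.mu x

/-- The energy functional `φ(u,v)` of the poly-Laplacian system (2.1). -/
noncomputable def energySys (Ω bΩ : Finset V) (m₁ m₂ : ℕ)
    (p q γ₁ γ₂ lam₁ lam₂ α β : ℝ) (h₁ h₂ c : V → ℝ) (u v : V → ℝ) : ℝ :=
  (1 / p) * G.integral (Ω ∪ bΩ) (fun x => G.gradm m₁ u x ^ p)
    - (lam₁ / γ₁) * G.integral Ω (fun x => h₁ x * |u x| ^ γ₁)
    + (1 / q) * G.integral (Ω ∪ bΩ) (fun x => G.gradm m₂ v x ^ q)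
    - (lam₂ / γ₂) * G.integral Ω (fun x => h₂ x * |v x| ^ γ₂)
    - (1 / (α + β)) * G.integral Ω (fun x => c x * |u x| ^ α * |v x| ^ β)

/-- `(u,v)` is a weak solution of the poly-Laplacian system (1.4)
(equivalently, a critical point of the energy functional `φ`). -/
def isWeakSolSys (Ω bΩ : Finset V) (m₁ m₂ : ℕ)
    (p q γ₁ γ₂ lam₁ lam₂ α β : ℝ) (h₁ h₂ c : V → ℝ) (u v : V → ℝ) : Prop :=
  (∀ φ : V → ℝ, suppIn Ω φ →
      G.bform Ω bΩ m₁ p u φ =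
        lam₁ * G.integral Ω (fun x => h₁ x * |u x| ^ (γ₁ - 2) * u x * φ x)
        + α / (α + β) * G.integral Ω (fun x => c x * |u x| ^ (α - 2) * u x * |v x| ^ β * φ x)) ∧
  (∀ ψ : V → ℝ, suppIn Ω ψ →
      G.bform Ω bΩ m₂ q v ψ =
        lam₂ * G.integral Ω (fun x => h₂ x * |v x| ^ (γ₂ - 2) * v x * ψ x)
        + β / (α + β) * G.integral Ω (fun x => c x * |u x| ^ α * |v x| ^ (β - 2) * v x * ψ x))

/-- The derivative `⟨φ'(u,v), (φ,ψ)⟩` of the energy functional of the system (2.2). -/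
noncomputable def energyDerivSys (Ω bΩ : Finset V) (m₁ m₂ : ℕ)
    (p q γ₁ γ₂ lam₁ lam₂ α β : ℝ) (h₁ h₂ c : V → ℝ) (u v φ ψ : V → ℝ) : ℝ :=
  G.bform Ω bΩ m₁ p u φ
    - lam₁ * G.integral Ω (fun x => h₁ x * |u x| ^ (γ₁ - 2) * u x * φ x)
    + G.bform Ω bΩ m₂ q v ψ
    - lam₂ * G.integral Ω (fun x => h₂ x * |v x| ^ (γ₂ - 2) * v x * ψ x)
    - α / (α + β) * G.integral Ω (fun x => c x * |u x| ^ (α - 2) * u x * |v x| ^ β * φ x)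
    - β / (α + β) * G.integral Ω (fun x => c x * |u x| ^ α * |v x| ^ (β - 2) * v x * ψ x)

/-- The energy functional `J(u)` of the single poly-Laplacian equation (1.5). -/
noncomputable def energyEq (Ω bΩ : Finset V) (m : ℕ)
    (p γ lam α : ℝ) (h c : V → ℝ) (u : V → ℝ) : ℝ :=
  (1 / p) * G.sobNorm Ω bΩ m p u ^ p
    - lam / γ * G.integral Ω (fun x => h x * |u x| ^ γ)
    - (1 / α) * G.integral Ω (fun x => c x * |u x| ^ α)

/-- `u` is a weak solution of the single equation `£_{m,p} u = λ h |u|^{γ-2} u + c |u|^{α-2} u`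
(equivalently, a critical point of `J`). -/
def isWeakSolEq (Ω bΩ : Finset V) (m : ℕ)
    (p γ lam α : ℝ) (h c : V → ℝ) (u : V → ℝ) : Prop :=
  ∀ φ : V → ℝ, suppIn Ω φ →
    G.bform Ω bΩ m p u φ =
      lam * G.integral Ω (fun x => h x * |u x| ^ (γ - 2) * u x * φ x)
      + G.integral Ω (fun x => c x * |u x| ^ (α - 2) * u x * φ x)

section FiniteGraph

variable [Fintype V]

/-- `∫_V f dμ` on a finite graph. -/
noncomputable def integralV (f : V → ℝ) : ℝ := ∑ x, f x * G.mu x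

/-- `‖f‖_{L^r(V)}` on a finite graph. -/
noncomputable def lpNormV (r : ℝ) (f : V → ℝ) : ℝ :=
  (∑ x, |f x| ^ r * G.mu x) ^ (1 / r)

/-- `‖f‖_{W^{m,s}(V)} = (∫_V (|∇^m f|^s + a |f|^s) dμ)^{1/s}` with potential `a`. -/
noncomputable def sobNormV (m : ℕ) (s : ℝ) (a f : V → ℝ) : ℝ :=
  (∑ x, (G.gradm m f x ^ s + a x * |f x| ^ s) * G.mu x) ^ (1 / s)

/-- The weak form `∫_V (£_{m,s} u) φ dμ` on a finite graph. -/
noncomputable def bformV (m : ℕ) (s : ℝ) (u φ : V → ℝ) : ℝ :=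
  ∑ x,
    G.gradm m u x ^ (s - 2) *
      (if m % 2 = 1 then G.gammaForm (G.lap^[(m - 1) / 2] u) (G.lap^[(m - 1) / 2] φ) x
       else (G.lap^[m / 2] u) x * (G.lap^[m / 2] φ) x) * G.mu x

/-- The energy functional `φ_V(u,v)` of the system (5.1) on a finite graph. -/
noncomputable def energySysV (m₁ m₂ : ℕ)
    (p q γ₁ γ₂ lam₁ lam₂ α β : ℝ) (a b h₁ h₂ c : V → ℝ) (u v : V → ℝ) : ℝ :=
  (1 / p) * G.integralV (fun x => G.gradm m₁ u x ^ p + a x * |u x| ^ p)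
    - (lam₁ / γ₁) * G.integralV (fun x => h₁ x * |u x| ^ γ₁)
    + (1 / q) * G.integralV (fun x => G.gradm m₂ v x ^ q + b x * |v x| ^ q)
    - (lam₂ / γ₂) * G.integralV (fun x => h₂ x * |v x| ^ γ₂)
    - (1 / (α + β)) * G.integralV (fun x => c x * |u x| ^ α * |v x| ^ β)

/-- `(u,v)` is a weak solution of the system (5.1), i.e. a critical point of `φ_V`. -/
def isWeakSolSysV (m₁ m₂ : ℕ)
    (p q γ₁ γ₂ lam₁ lam₂ α β : ℝ) (a b h₁ h₂ c : V → ℝ) (u v : V → ℝ) : Prop :=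
  (∀ φ : V → ℝ,
      G.bformV m₁ p u φ + G.integralV (fun x => a x * |u x| ^ (p - 2) * u x * φ x) =
        lam₁ * G.integralV (fun x => h₁ x * |u x| ^ (γ₁ - 2) * u x * φ x)
        + α / (α + β) * G.integralV (fun x => c x * |u x| ^ (α - 2) * u x * |v x| ^ β * φ x)) ∧
  (∀ ψ : V → ℝ,
      G.bformV m₂ q v ψ + G.integralV (fun x => b x * |v x| ^ (q - 2) * v x * ψ x) =
        lam₂ * G.integralV (fun x => h₂ x * |v x| ^ (γ₂ - 2) * v x * ψ x)
        + β / (α + β) * G.integralV (fun x => c x * |u x| ^ α * |v x| ^ (β - 2) * v x * ψ x))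

/-- The energy functional `J_V(u)` of the single equation (5.2) on a finite graph. -/
noncomputable def energyEqV (m : ℕ)
    (p γ lam α : ℝ) (a h c : V → ℝ) (u : V → ℝ) : ℝ :=
  (1 / p) * G.sobNormV m p a u ^ p
    - lam / γ * G.integralV (fun x => h x * |u x| ^ γ)
    - (1 / α) * G.integralV (fun x => c x * |u x| ^ α)

/-- `u` is a weak solution of `£_{m,p} u + a|u|^{p-2}u = λ h |u|^{γ-2} u + c |u|^{α-2} u` on `V`,
i.e. a critical point of `J_V`. -/
def isWeakSolEqV (m : ℕ)
    (p γ lam α : ℝ) (a h c : V → ℝ) (u : V → ℝ) : Prop :=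
  ∀ φ : V → ℝ,
    G.bformV m p u φ + G.integralV (fun x => a x * |u x| ^ (p - 2) * u x * φ x) =
      lam * G.integralV (fun x => h x * |u x| ^ (γ - 2) * u x * φ x)
      + G.integralV (fun x => c x * |u x| ^ (α - 2) * u x * φ x)

end FiniteGraph

end GraphSetting


private lemma aux_rpow_self {a s : ℝ} (ha : 0 ≤ a) (hs : s ≠ 0) :
    a ^ (s - 2) * (a * a) = a ^ s := by
  rcases eq_or_lt_of_le ha with h | h
  · simp [← h, Real.zero_rpow hs]
  · have h2 : a * a = a ^ (2 : ℝ) := by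
      rw [show (2:ℝ) = ((2:ℕ):ℝ) by norm_num, Real.rpow_natCast]; ring
    rw [h2, ← Real.rpow_add h]; ring_nf

private lemma gamma_self_nonneg {V : Type} [DecidableEq V] (G : GraphSetting V)
    (f : V → ℝ) (x : V) : 0 ≤ G.gammaForm f f x := by
  obtain ⟨μ₀, hμ₀, hmu⟩ := G.mu_bound
  have hμ : 0 < G.mu x := lt_of_lt_of_le hμ₀ (hmu x)
  unfold GraphSetting.gammaForm
  apply mul_nonneg
  · positivity
  · apply Finset.sum_nonneg
    intro y hy
    have hw := G.w_pos x y hy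
    nlinarith [mul_self_nonneg (f y - f x)]

/-- Key estimate: if `u` is supported in `Ω` and satisfies the self-tested weak
equation with only the `h`-term, then the Sobolev norm bound holds. -/
private lemma key_estimate {V : Type} [DecidableEq V] (G : GraphSetting V)
    (Ω : Finset V) (hΩ : Ω.Nonempty) (m : ℕ) (s γ lam C : ℝ)
    (hs : 1 < s) (hγ : 1 < γ) (hγs : γ < s) (hlam : 0 < lam) (hC : 0 < C)
    (h : V → ℝ) (hh : ∀ x ∈ Ω, 0 < h x)
    (hemb : ∀ r : ℝ, 1 ≤ r → ∀ u : V → ℝ, suppIn Ω u →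
      G.lpNorm Ω r u ≤ C * G.sobNorm Ω (G.bdry Ω) m s u)
    (u : V → ℝ) (hu : suppIn Ω u)
    (heq : G.bform Ω (G.bdry Ω) m s u u =
      lam * G.integral Ω (fun x => h x * |u x| ^ (γ - 2) * u x * u x)) :
    G.sobNorm Ω (G.bdry Ω) m s u ≤ (lam * Ω.sup' hΩ h * C ^ γ) ^ (1 / (s - γ)) := by
  obtain ⟨μ₀, hμ₀, hmu⟩ := G.mu_bound
  have hμ : ∀ x : V, 0 < G.mu x := fun x => lt_of_lt_of_le hμ₀ (hmu x)
  have hs0 : s ≠ 0 := by positivity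
  have hγ0 : γ ≠ 0 := by positivity
  set N := G.sobNorm Ω (G.bdry Ω) m s u with hN
  set S := ∑ x ∈ Ω ∪ G.bdry Ω, G.gradm m u x ^ s * G.mu x with hSdef
  have hgnn : ∀ x, 0 ≤ G.gradm m u x := by
    intro x; unfold GraphSetting.gradm; split
    · exact Real.sqrt_nonneg _
    · exact abs_nonneg _
  have hS0 : 0 ≤ S := by
    apply Finset.sum_nonneg; intro x _
    exact mul_nonneg (Real.rpow_nonneg (hgnn x) s) (hμ x).le
  have hN0 : 0 ≤ N := Real.rpow_nonneg hS0 _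
  -- bform u u = S
  have hb : G.bform Ω (G.bdry Ω) m s u u = S := by
    unfold GraphSetting.bform
    apply Finset.sum_congr rfl
    intro x _
    congr 1
    by_cases hpar : m % 2 = 1
    · rw [if_pos hpar]
      have hΓ := gamma_self_nonneg G (G.lap^[(m - 1) / 2] u) x
      have : G.gammaForm (G.lap^[(m - 1) / 2] u) (G.lap^[(m - 1) / 2] u) x
          = G.gradm m u x * G.gradm m u x := by
        unfold GraphSetting.gradm GraphSetting.gradLen
        rw [if_pos hpar]
        exact (Real.mul_self_sqrt hΓ).symm
      rw [this, aux_rpow_self (hgnn x) hs0]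
    · rw [if_neg hpar]
      have : (G.lap^[m / 2] u) x * (G.lap^[m / 2] u) x
          = G.gradm m u x * G.gradm m u x := by
        unfold GraphSetting.gradm
        rw [if_neg hpar, abs_mul_abs_self]
      rw [this, aux_rpow_self (hgnn x) hs0]
  -- N ^ s = S
  have hNs : N ^ s = S := by
    rw [hN]; unfold GraphSetting.sobNorm
    rw [← Real.rpow_mul hS0, one_div, inv_mul_cancel₀ hs0, Real.rpow_one]
  -- RHS bound
  set H := Ω.sup' hΩ h with hHdef
  have hH0 : 0 < H := by
    obtain ⟨x₀, hx₀⟩ := hΩ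
    exact lt_of_lt_of_le (hh x₀ hx₀) (Finset.le_sup' h hx₀)
  have hLγ : ∑ x ∈ Ω, |u x| ^ γ * G.mu x = G.lpNorm Ω γ u ^ γ := by
    unfold GraphSetting.lpNorm
    rw [← Real.rpow_mul, one_div, inv_mul_cancel₀ hγ0, Real.rpow_one]
    apply Finset.sum_nonneg; intro x _
    exact mul_nonneg (Real.rpow_nonneg (abs_nonneg _) γ) (hμ x).le
  have hrhs : lam * G.integral Ω (fun x => h x * |u x| ^ (γ - 2) * u x * u x)
      ≤ lam * H * C ^ γ * N ^ γ := by
    have step1 : G.integral Ω (fun x => h x * |u x| ^ (γ - 2) * u x * u x)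
        ≤ H * ∑ x ∈ Ω, |u x| ^ γ * G.mu x := by
      unfold GraphSetting.integral
      rw [Finset.mul_sum]
      apply Finset.sum_le_sum
      intro x hx
      dsimp only
      have habs : |u x| ^ (γ - 2) * (u x * u x) = |u x| ^ γ := by
        rw [show u x * u x = |u x| * |u x| from (abs_mul_abs_self _).symm]
        exact aux_rpow_self (abs_nonneg _) hγ0
      have : h x * |u x| ^ (γ - 2) * u x * u x = h x * |u x| ^ γ := by
        rw [← habs]; ring
      rw [this, mul_assoc]
      apply mul_le_mul_of_nonneg_right (Finset.le_sup' h hx)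
      exact mul_nonneg (Real.rpow_nonneg (abs_nonneg _) γ) (hμ x).le
    have step2 : G.lpNorm Ω γ u ^ γ ≤ C ^ γ * N ^ γ := by
      rw [← Real.mul_rpow hC.le hN0]
      apply Real.rpow_le_rpow (by
        unfold GraphSetting.lpNorm
        apply Real.rpow_nonneg
        apply Finset.sum_nonneg; intro x _
        exact mul_nonneg (Real.rpow_nonneg (abs_nonneg _) γ) (hμ x).le)
        (hemb γ hγ.le u hu) (by positivity)
    calc lam * G.integral Ω (fun x => h x * |u x| ^ (γ - 2) * u x * u x)
        ≤ lam * (H * ∑ x ∈ Ω, |u x| ^ γ * G.mu x) :=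
          mul_le_mul_of_nonneg_left step1 hlam.le
      _ = lam * H * (G.lpNorm Ω γ u ^ γ) := by rw [hLγ]; ring
      _ ≤ lam * H * (C ^ γ * N ^ γ) :=
          mul_le_mul_of_nonneg_left step2 (by positivity)
      _ = lam * H * C ^ γ * N ^ γ := by ring
  have hmain : N ^ s ≤ lam * H * C ^ γ * N ^ γ := by
    rw [hNs, ← hb, heq]; exact hrhs
  set K := lam * H * C ^ γ with hKdef
  have hK0 : 0 < K := by positivity
  have hsγ : 0 < s - γ := by linarith
  rcases eq_or_lt_of_le hN0 with hNz | hNpos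
  · rw [← hNz]
    exact Real.rpow_nonneg hK0.le _
  · have hdiff : N ^ (s - γ) ≤ K := by
      have hNγ : 0 < N ^ γ := Real.rpow_pos_of_pos hNpos γ
      have : N ^ (s - γ) * N ^ γ ≤ K * N ^ γ := by
        rw [← Real.rpow_add hNpos]; rw [sub_add_cancel]; exact hmain
      exact le_of_mul_le_mul_right this hNγ
    calc N = (N ^ (s - γ)) ^ (1 / (s - γ)) := by
          rw [← Real.rpow_mul hNpos.le, mul_one_div, div_self hsγ.ne', Real.rpow_one]
      _ ≤ K ^ (1 / (s - γ)) :=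
          Real.rpow_le_rpow (Real.rpow_nonneg hN0 _) hdiff (by positivity)

/-- Theorem 1.2: estimates for semi-trivial solutions of the poly-Laplacian system. -/
theorem semi_trivial_solution_estimate
    {V : Type} [DecidableEq V] (G : GraphSetting V)
    (Ω : Finset V) (hΩ : Ω.Nonempty) (hbΩ : (G.bdry Ω).Nonempty)
    (m₁ m₂ : ℕ) (hm₁ : 0 < m₁) (hm₂ : 0 < m₂)
    (p q γ₁ γ₂ lam₁ lam₂ α β : ℝ)
    (hp : 1 < p) (hq : 1 < q) (hγ₁ : 1 < γ₁) (hγ₂ : 1 < γ₂)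
    (hα : 0 < α) (hβ : 0 < β)
    (hγpq : max γ₁ γ₂ < min p q) (hpqαβ : max p q < α + β)
    (h₁ h₂ c : V → ℝ)
    (hh₁ : ∀ x ∈ Ω, 0 < h₁ x) (hh₂ : ∀ x ∈ Ω, 0 < h₂ x) (hc : ∀ x ∈ Ω, 0 < c x)
    (C₁ C₂ : ℝ) (hC₁ : 0 < C₁) (hC₂ : 0 < C₂)
    (hemb₁ : ∀ r : ℝ, 1 ≤ r → ∀ u : V → ℝ, suppIn Ω u →
      G.lpNorm Ω r u ≤ C₁ * G.sobNorm Ω (G.bdry Ω) m₁ p u)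
    (hemb₂ : ∀ r : ℝ, 1 ≤ r → ∀ v : V → ℝ, suppIn Ω v →
      G.lpNorm Ω r v ≤ C₂ * G.sobNorm Ω (G.bdry Ω) m₂ q v)
    (hlam₁ : 0 < lam₁) (hlam₂ : 0 < lam₂) :
    (∀ u : V → ℝ, suppIn Ω u →
        G.isWeakSolSys Ω (G.bdry Ω) m₁ m₂ p q γ₁ γ₂ lam₁ lam₂ α β h₁ h₂ c u 0 →
        G.sobNorm Ω (G.bdry Ω) m₁ p u ≤ (lam₁ * Ω.sup' hΩ h₁ * C₁ ^ γ₁) ^ (1 / (p - γ₁))) ∧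
    (∀ v : V → ℝ, suppIn Ω v →
        G.isWeakSolSys Ω (G.bdry Ω) m₁ m₂ p q γ₁ γ₂ lam₁ lam₂ α β h₁ h₂ c 0 v →
        G.sobNorm Ω (G.bdry Ω) m₂ q v ≤ (lam₂ * Ω.sup' hΩ h₂ * C₂ ^ γ₂) ^ (1 / (q - γ₂))) := by
  have hγ₁p : γ₁ < p := lt_of_le_of_lt (le_max_left γ₁ γ₂) (lt_of_lt_of_le hγpq (min_le_left p q))
  have hγ₂q : γ₂ < q := lt_of_le_of_lt (le_max_right γ₁ γ₂) (lt_of_lt_of_le hγpq (min_le_right p q))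
  constructor
  · intro u hu hsol
    apply key_estimate G Ω hΩ m₁ p γ₁ lam₁ C₁ hp hγ₁ hγ₁p hlam₁ hC₁ h₁ hh₁ hemb₁ u hu
    have := hsol.1 u hu
    rw [this]
    have hz : G.integral Ω (fun x => c x * |u x| ^ (α - 2) * u x * |(0 : V → ℝ) x| ^ β * u x) = 0 := by
      unfold GraphSetting.integral
      apply Finset.sum_eq_zero; intro x _
      simp [Real.zero_rpow hβ.ne']
    rw [hz]; ring
  · intro v hv hsol
    apply key_estimate G Ω hΩ m₂ q γ₂ lam₂ C₂ hq hγ₂ hγ₂q hlam₂ hC₂ h₂ hh₂ hemb₂ v hv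
    have := hsol.2 v hv
    rw [this]
    have hz : G.integral Ω (fun x => c x * |(0 : V → ℝ) x| ^ α * |v x| ^ (β - 2) * v x * v x) = 0 := by
      unfold GraphSetting.integral
      apply Finset.sum_eq_zero; intro x _
      simp [Real.zero_rpow hα.ne']
    rw [hz]; ring
end

section
/- Suppose every x∈Ω has at least one neighbour y∈∂Ω. Then for every s≥2, every 1≤r<∞, and every u∈W_0^{1,s}(Ω): ‖u‖_{L^r(Ω)} ≤ C_{1,s}(Ω)·‖u‖_{W_0^{1,s}(Ω)}, where C_{1,s}(Ω) = (1+|Ω|)·μ̂_min^{−1/s}·(2μ_max/w_min)^{1/2}, |Ω| = Σ_{x∈Ω}μ(x), μ̂_min = min_{x∈Ω}μ(x), μ_max = max_{x∈Ω∪∂Ω}μ(x), and w_min is the minimum of the weights ω_{xy} over edges with both endpoints in Ω∪∂Ω. -/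
open Finset Filter

/-- Lemma 2.2: explicit embedding constant for `W₀^{1,s}(Ω) ↪ L^r(Ω)` when every
vertex of `Ω` has a neighbour on the boundary. -/
theorem embedding_W01s_into_Lr_explicit_constant
    {V : Type} [DecidableEq V] (G : GraphSetting V)
    (Ω : Finset V) (hΩ : Ω.Nonempty) (hbΩ : (G.bdry Ω).Nonempty)
    (hnb : ∀ x ∈ Ω, ∃ y ∈ G.bdry Ω, y ∈ G.nbr x)
    (μmax wmin : ℝ)
    (hμmax : IsGreatest {t : ℝ | ∃ x ∈ Ω ∪ G.bdry Ω, t = G.mu x} μmax)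
    (hwmin : IsLeast {t : ℝ | ∃ x ∈ Ω ∪ G.bdry Ω, ∃ y ∈ Ω ∪ G.bdry Ω,
      y ∈ G.nbr x ∧ t = G.w x y} wmin)
    (μmin : ℝ) (hμmin : IsLeast {t : ℝ | ∃ x ∈ Ω, t = G.mu x} μmin) :
    ∀ s : ℝ, 2 ≤ s → ∀ r : ℝ, 1 ≤ r → ∀ u : V → ℝ, suppIn Ω u →
      G.lpNorm Ω r u ≤
        (1 + ∑ x ∈ Ω, G.mu x) * μmin ^ (-(1 / s)) * Real.sqrt (2 * μmax / wmin) *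
          G.sobNorm Ω (G.bdry Ω) 1 s u := by
  intro s hs r hr u hu
  obtain ⟨μ₀, hμ₀pos, hμ₀⟩ := G.mu_bound
  have hmu_pos : ∀ x, 0 < G.mu x := fun x => lt_of_lt_of_le hμ₀pos (hμ₀ x)
  have hs' : (0:ℝ) < s := lt_of_lt_of_le two_pos hs
  have hr' : (0:ℝ) < r := lt_of_lt_of_le one_pos hr
  -- positivity of constants
  have hμmin_pos : 0 < μmin := by
    obtain ⟨x0, _, hx0eq⟩ := hμmin.1
    rw [hx0eq]; exact hmu_pos x0
  have hμmax_pos : 0 < μmax := by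
    obtain ⟨x0, _, hx0eq⟩ := hμmax.1
    rw [hx0eq]; exact hmu_pos x0
  have hwmin_pos : 0 < wmin := by
    obtain ⟨x0, _, y0, _, hy0, hweq⟩ := hwmin.1
    rw [hweq]; exact G.w_pos x0 y0 hy0
  have hgradm : ∀ x, G.gradm 1 u x = G.gradLen u x := by
    intro x; simp [GraphSetting.gradm]
  set A := ∑ x ∈ Ω ∪ G.bdry Ω, G.gradLen u x ^ s * G.mu x with hAdef
  have hA0 : 0 ≤ A := Finset.sum_nonneg fun x _ =>
    mul_nonneg (Real.rpow_nonneg (Real.sqrt_nonneg _) _) (hmu_pos x).le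
  have hSnorm : G.sobNorm Ω (G.bdry Ω) 1 s u = A ^ (1/s) := by
    unfold GraphSetting.sobNorm
    congr 1
  set S := A ^ (1/s) with hSdef
  have hS0 : 0 ≤ S := Real.rpow_nonneg hA0 _
  have hSs : S ^ s = A := by
    rw [hSdef, ← Real.rpow_mul hA0, one_div_mul_cancel (ne_of_gt hs'), Real.rpow_one]
  -- bound on gradLen at each point of Ω
  have hgrad_le : ∀ x ∈ Ω, G.gradLen u x ≤ μmin ^ (-(1/s)) * S := by
    intro x hx
    have hterm : G.gradLen u x ^ s * μmin ≤ A := by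
      calc G.gradLen u x ^ s * μmin ≤ G.gradLen u x ^ s * G.mu x := by
            apply mul_le_mul_of_nonneg_left _ (Real.rpow_nonneg (Real.sqrt_nonneg _) _)
            exact hμmin.2 ⟨x, hx, rfl⟩
        _ ≤ A := Finset.single_le_sum (f := fun x => G.gradLen u x ^ s * G.mu x)
            (fun y _ => mul_nonneg (Real.rpow_nonneg (Real.sqrt_nonneg _) _) (hmu_pos y).le)
            (Finset.mem_union_left _ hx)
    have h1 : G.gradLen u x ^ s ≤ A / μmin := (le_div_iff₀ hμmin_pos).2 hterm
    have hg0 : 0 ≤ G.gradLen u x := Real.sqrt_nonneg _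
    have h2 : G.gradLen u x = (G.gradLen u x ^ s) ^ (1/s) := by
      rw [← Real.rpow_mul hg0, mul_one_div_cancel (ne_of_gt hs'), Real.rpow_one]
    rw [h2]
    calc (G.gradLen u x ^ s) ^ (1/s) ≤ (A / μmin) ^ (1/s) :=
          Real.rpow_le_rpow (Real.rpow_nonneg (Real.sqrt_nonneg _) _) h1
            (by positivity)
      _ = μmin ^ (-(1/s)) * S := by
          rw [Real.div_rpow hA0 hμmin_pos.le, Real.rpow_neg hμmin_pos.le,
            div_eq_mul_inv, mul_comm]
  -- pointwise bound on |u|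
  set K := Real.sqrt (2 * μmax / wmin) * (μmin ^ (-(1/s)) * S) with hKdef
  have hK0 : 0 ≤ K := mul_nonneg (Real.sqrt_nonneg _)
    (mul_nonneg (Real.rpow_nonneg hμmin_pos.le _) hS0)
  have hkey : ∀ x ∈ Ω, |u x| ≤ K := by
    intro x hx
    obtain ⟨y, hyb, hynbr⟩ := hnb x hx
    have hynbr' : y ∈ G.nbr x := hynbr
    have huy : u y = 0 := hu y (Finset.mem_sdiff.1 hyb).2
    have hw_ge : wmin ≤ G.w x y :=
      hwmin.2 ⟨x, Finset.mem_union_left _ hx, y, Finset.mem_union_right _ hyb, hynbr', rfl⟩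
    have hμx := hmu_pos x
    -- gammaForm lower bound
    have hγ : wmin / (2 * μmax) * (u x)^2 ≤ G.gammaForm u u x := by
      unfold GraphSetting.gammaForm
      have hsum : G.w x y * (u x)^2 ≤ ∑ z ∈ G.nbr x, G.w x z * (u z - u x) * (u z - u x) := by
        have := Finset.single_le_sum
          (f := fun z => G.w x z * (u z - u x) * (u z - u x))
          (fun z hz => by
            show 0 ≤ G.w x z * (u z - u x) * (u z - u x)
            rw [mul_assoc]
            exact mul_nonneg (G.w_pos x z hz).le (mul_self_nonneg _)) hynbr'
        calc G.w x y * (u x)^2 = G.w x y * (u y - u x) * (u y - u x) := by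
              rw [huy]; ring
          _ ≤ _ := this
      have hμle : G.mu x ≤ μmax := hμmax.2 ⟨x, Finset.mem_union_left _ hx, rfl⟩
      have h1 : wmin * (u x)^2 ≤ G.w x y * (u x)^2 :=
        mul_le_mul_of_nonneg_right hw_ge (sq_nonneg _)
      have h2 : wmin / (2 * μmax) * (u x)^2 ≤ wmin / (2 * G.mu x) * (u x)^2 := by
        apply mul_le_mul_of_nonneg_right _ (sq_nonneg _)
        apply div_le_div_of_nonneg_left hwmin_pos.le (by positivity)
        linarith
      calc wmin / (2 * μmax) * (u x)^2 ≤ wmin / (2 * G.mu x) * (u x)^2 := h2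
        _ ≤ 1 / (2 * G.mu x) * ∑ z ∈ G.nbr x, G.w x z * (u z - u x) * (u z - u x) := by
            rw [div_mul_eq_mul_div, one_div, inv_mul_eq_div]
            apply div_le_div_of_nonneg_right _ (by positivity)
            linarith
    have hgl : Real.sqrt (wmin / (2 * μmax)) * |u x| ≤ G.gradLen u x := by
      unfold GraphSetting.gradLen
      have : Real.sqrt (wmin / (2 * μmax) * (u x)^2) ≤ Real.sqrt (G.gammaForm u u x) :=
        Real.sqrt_le_sqrt hγ
      rwa [Real.sqrt_mul (by positivity), Real.sqrt_sq_eq_abs] at this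
    have hprod : Real.sqrt (2 * μmax / wmin) * Real.sqrt (wmin / (2 * μmax)) = 1 := by
      rw [← Real.sqrt_mul (by positivity)]
      rw [show 2 * μmax / wmin * (wmin / (2 * μmax)) = 1 by field_simp]
      exact Real.sqrt_one
    have : |u x| ≤ Real.sqrt (2 * μmax / wmin) * G.gradLen u x := by
      have := mul_le_mul_of_nonneg_left hgl (Real.sqrt_nonneg (2 * μmax / wmin))
      calc |u x| = Real.sqrt (2 * μmax / wmin) * Real.sqrt (wmin / (2 * μmax)) * |u x| := by
            rw [hprod, one_mul]
        _ = Real.sqrt (2 * μmax / wmin) * (Real.sqrt (wmin / (2 * μmax)) * |u x|) := by ring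
        _ ≤ _ := this
    calc |u x| ≤ Real.sqrt (2 * μmax / wmin) * G.gradLen u x := this
      _ ≤ K := by
          rw [hKdef]
          exact mul_le_mul_of_nonneg_left (hgrad_le x hx) (Real.sqrt_nonneg _)
  -- now bound the Lp norm
  set T := ∑ x ∈ Ω, G.mu x with hTdef
  have hT0 : 0 < T := Finset.sum_pos (fun x _ => hmu_pos x) hΩ
  have hsum_le : ∑ x ∈ Ω, |u x| ^ r * G.mu x ≤ K ^ r * T := by
    rw [hTdef, Finset.mul_sum]
    apply Finset.sum_le_sum
    intro x hx
    exact mul_le_mul_of_nonneg_right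
      (Real.rpow_le_rpow (abs_nonneg _) (hkey x hx) hr'.le) (hmu_pos x).le
  have hlp : G.lpNorm Ω r u ≤ K * T ^ (1/r) := by
    unfold GraphSetting.lpNorm
    calc (∑ x ∈ Ω, |u x| ^ r * G.mu x) ^ (1/r) ≤ (K ^ r * T) ^ (1/r) :=
          Real.rpow_le_rpow (Finset.sum_nonneg fun x _ =>
            mul_nonneg (Real.rpow_nonneg (abs_nonneg _) _) (hmu_pos x).le)
            hsum_le (by positivity)
      _ = K * T ^ (1/r) := by
          rw [Real.mul_rpow (Real.rpow_nonneg hK0 _) hT0.le,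
            ← Real.rpow_mul hK0, mul_one_div_cancel (ne_of_gt hr'), Real.rpow_one]
  have hTr : T ^ (1/r) ≤ 1 + T := by
    rcases le_or_gt T 1 with h | h
    · calc T ^ (1/r) ≤ 1 ^ (1/r) := Real.rpow_le_rpow hT0.le h (by positivity)
        _ = 1 := Real.one_rpow _
        _ ≤ 1 + T := by linarith
    · calc T ^ (1/r) ≤ T ^ (1:ℝ) := by
            apply Real.rpow_le_rpow_of_exponent_le h.le
            rw [div_le_one hr']; exact hr
        _ = T := Real.rpow_one T
        _ ≤ 1 + T := by linarith
  calc G.lpNorm Ω r u ≤ K * T ^ (1/r) := hlp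
    _ ≤ K * (1 + T) := mul_le_mul_of_nonneg_left hTr hK0
    _ = (1 + T) * μmin ^ (-(1/s)) * Real.sqrt (2 * μmax / wmin) * S := by
        rw [hKdef]; ring
    _ = (1 + ∑ x ∈ Ω, G.mu x) * μmin ^ (-(1/s)) * Real.sqrt (2 * μmax / wmin) *
          G.sobNorm Ω (G.bdry Ω) 1 s u := by rw [hSnorm]
end

section
/- Suppose (λ₁,λ₂) satisfies condition (1.8): 0<λ₁<C_{m₁,p}(Ω)^{−p}, 0<λ₂<C_{m₂,q}(Ω)^{−q}, M_{(λ₁,λ₂)} ≤ ((α+β)/max{p,q})·M₂, and (λ₁(p−γ₁)/(pγ₁))‖h₁‖_{L^{p/(p−γ₁)}(Ω)}^{p/(p−γ₁)} + (λ₂(q−γ₂)/(qγ₂))‖h₂‖_{L^{q/(q−γ₂)}(Ω)}^{q/(q−γ₂)} < ((α+β−max{p,q})/(α+β))·M_{(λ₁,λ₂)}^{(α+β)/(α+β−max{p,q})}·(max{p,q}/((α+β)M₂))^{max{p,q}/(α+β−max{p,q})}. Then the number ρ = (max{p,q}·M_{(λ₁,λ₂)}/((α+β)M₂))^{1/(α+β−max{p,q})}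 satisfies 0<ρ≤1 and φ(u,v) > 0 for every (u,v) ∈ W with ‖(u,v)‖_W = ρ. -/
open Finset Filter

private lemma rpow_one_div_rpow' {S s : ℝ} (hS : 0 ≤ S) (hs : s ≠ 0) :
    (S ^ (1/s)) ^ s = S := by
  rw [← Real.rpow_mul hS, one_div_mul_cancel hs, Real.rpow_one]

private lemma two_rpow_helper' {a b s : ℝ} (ha : 0 ≤ a) (hb : 0 ≤ b) (hs : 1 ≤ s) :
    (2:ℝ) ^ (1 - s) * (a + b) ^ s ≤ a ^ s + b ^ s := by
  have h := NNReal.coe_le_coe.2 (NNReal.rpow_add_le_mul_rpow_add_rpow ⟨a, ha⟩ ⟨b, hb⟩ hs)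
  push_cast at h
  have key : (2:ℝ) ^ (1 - s) * 2 ^ (s - 1) = 1 := by
    rw [← Real.rpow_add two_pos]; norm_num
  calc (2:ℝ) ^ (1 - s) * (a + b) ^ s
      ≤ 2 ^ (1 - s) * (2 ^ (s - 1) * (a ^ s + b ^ s)) :=
        mul_le_mul_of_nonneg_left h (Real.rpow_pos_of_pos two_pos _).le
    _ = a ^ s + b ^ s := by rw [← mul_assoc, key, one_mul]

private lemma gradm_nonneg' {V : Type} [DecidableEq V] (G : GraphSetting V)
    (m : ℕ) (f : V → ℝ) (x : V) : 0 ≤ G.gradm m f x := by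
  unfold GraphSetting.gradm
  split
  · exact Real.sqrt_nonneg _
  · exact abs_nonneg _

set_option maxHeartbeats 2000000 in
/-- Lemma 3.1: mountain-pass geometry; on the sphere of radius
`ρ = (max{p,q} M₁/((α+β)M₂))^{1/(α+β-max{p,q})}` the energy is positive. -/
theorem energy_positive_on_sphere
    {V : Type} [DecidableEq V] (G : GraphSetting V)
    (Ω : Finset V) (hΩ : Ω.Nonempty) (hbΩ : (G.bdry Ω).Nonempty)
    (m₁ m₂ : ℕ) (hm₁ : 0 < m₁) (hm₂ : 0 < m₂)
    (p q γ₁ γ₂ lam₁ lam₂ α β : ℝ)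
    (hp : 1 < p) (hq : 1 < q) (hγ₁ : 1 < γ₁) (hγ₂ : 1 < γ₂)
    (hα : 0 < α) (hβ : 0 < β)
    (hγpq : max γ₁ γ₂ < min p q) (hpqαβ : max p q < α + β)
    (h₁ h₂ c : V → ℝ)
    (hh₁ : ∀ x ∈ Ω, 0 < h₁ x) (hh₂ : ∀ x ∈ Ω, 0 < h₂ x) (hc : ∀ x ∈ Ω, 0 < c x)
    (C₁ C₂ : ℝ) (hC₁ : 0 < C₁) (hC₂ : 0 < C₂)
    (hemb₁ : ∀ r : ℝ, 1 ≤ r → ∀ u : V → ℝ, suppIn Ω u →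
      G.lpNorm Ω r u ≤ C₁ * G.sobNorm Ω (G.bdry Ω) m₁ p u)
    (hemb₂ : ∀ r : ℝ, 1 ≤ r → ∀ v : V → ℝ, suppIn Ω v →
      G.lpNorm Ω r v ≤ C₂ * G.sobNorm Ω (G.bdry Ω) m₂ q v)
    (C₀ M1 M2 : ℝ) (hC₀ : C₀ = Ω.sup' hΩ c)
    (hM1 : M1 = (2 : ℝ) ^ (1 - max p q) *
      min ((1 - lam₁ * C₁ ^ p) / p) ((1 - lam₂ * C₂ ^ q) / q))
    (hM2 : M2 = C₀ / (α + β) ^ 2 * (α * C₁ ^ (α + β) + β * C₂ ^ (α + β)))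
    (hlam₁ : 0 < lam₁) (hlam₁' : lam₁ < C₁ ^ (-p))
    (hlam₂ : 0 < lam₂) (hlam₂' : lam₂ < C₂ ^ (-q))
    (hcond3 : M1 ≤ (α + β) / max p q * M2)
    (hcond4 : lam₁ * (p - γ₁) / (p * γ₁) * G.lpNorm Ω (p / (p - γ₁)) h₁ ^ (p / (p - γ₁))
        + lam₂ * (q - γ₂) / (q * γ₂) * G.lpNorm Ω (q / (q - γ₂)) h₂ ^ (q / (q - γ₂))
        < (α + β - max p q) / (α + β) * M1 ^ ((α + β) / (α + β - max p q))
          * (max p q / ((α + β) * M2)) ^ (max p q / (α + β - max p q)))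
    (ρ : ℝ)
    (hρ : ρ = (max p q * M1 / ((α + β) * M2)) ^ (1 / (α + β - max p q))) :
    (0 < ρ ∧ ρ ≤ 1) ∧
    ∀ u v : V → ℝ, suppIn Ω u → suppIn Ω v →
      G.sobNorm Ω (G.bdry Ω) m₁ p u + G.sobNorm Ω (G.bdry Ω) m₂ q v = ρ →
      0 < G.energySys Ω (G.bdry Ω) m₁ m₂ p q γ₁ γ₂ lam₁ lam₂ α β h₁ h₂ c u v := by
  obtain ⟨μ₀, hμ₀, hμb⟩ := G.mu_bound
  have hμ : ∀ x, (0:ℝ) < G.mu x := fun x => lt_of_lt_of_le hμ₀ (hμb x)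
  set s := max p q with hs_def
  have hp0 : (0:ℝ) < p := lt_trans one_pos hp
  have hq0 : (0:ℝ) < q := lt_trans one_pos hq
  have hs1 : 1 < s := lt_of_lt_of_le hp (le_max_left p q)
  have hs0 : (0:ℝ) < s := lt_trans one_pos hs1
  have hab : (0:ℝ) < α + β := by positivity
  have hd : (0:ℝ) < α + β - s := sub_pos.2 hpqαβ
  have hγ₁0 : (0:ℝ) < γ₁ := lt_trans one_pos hγ₁
  have hγ₂0 : (0:ℝ) < γ₂ := lt_trans one_pos hγ₂
  have hγ₁p : γ₁ < p :=
    lt_of_le_of_lt (le_max_left γ₁ γ₂) (lt_of_lt_of_le hγpq (min_le_left p q))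
  have hγ₂q : γ₂ < q :=
    lt_of_le_of_lt (le_max_right γ₁ γ₂) (lt_of_lt_of_le hγpq (min_le_right p q))
  have hC₁p : (0:ℝ) < C₁ ^ p := Real.rpow_pos_of_pos hC₁ p
  have hC₂q : (0:ℝ) < C₂ ^ q := Real.rpow_pos_of_pos hC₂ q
  have h1p : lam₁ * C₁ ^ p < 1 := by
    rw [Real.rpow_neg hC₁.le] at hlam₁'
    calc lam₁ * C₁ ^ p < (C₁ ^ p)⁻¹ * C₁ ^ p := mul_lt_mul_of_pos_right hlam₁' hC₁p
      _ = 1 := inv_mul_cancel₀ hC₁p.ne'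
  have h1q : lam₂ * C₂ ^ q < 1 := by
    rw [Real.rpow_neg hC₂.le] at hlam₂'
    calc lam₂ * C₂ ^ q < (C₂ ^ q)⁻¹ * C₂ ^ q := mul_lt_mul_of_pos_right hlam₂' hC₂q
      _ = 1 := inv_mul_cancel₀ hC₂q.ne'
  set mm := min ((1 - lam₁ * C₁ ^ p) / p) ((1 - lam₂ * C₂ ^ q) / q) with hmm_def
  have hmm : 0 < mm :=
    lt_min (div_pos (sub_pos.2 h1p) hp0) (div_pos (sub_pos.2 h1q) hq0)
  have hM1pos : 0 < M1 := by
    rw [hM1]; exact mul_pos (Real.rpow_pos_of_pos two_pos _) hmm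
  have hC₀pos : 0 < C₀ := by
    obtain ⟨x, hx⟩ := hΩ
    exact hC₀ ▸ lt_of_lt_of_le (hc x hx) (Finset.le_sup' c hx)
  have hM2pos : 0 < M2 := by
    rw [hM2]
    have h1 : (0:ℝ) < C₁ ^ (α+β) := Real.rpow_pos_of_pos hC₁ _
    have h2 : (0:ℝ) < C₂ ^ (α+β) := Real.rpow_pos_of_pos hC₂ _
    positivity
  set t := s * M1 / ((α + β) * M2) with ht_def
  have ht : 0 < t := div_pos (mul_pos hs0 hM1pos) (mul_pos hab hM2pos)
  have ht1 : t ≤ 1 := by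
    rw [ht_def, div_le_one (mul_pos hab hM2pos)]
    calc s * M1 ≤ s * ((α+β)/s * M2) :=
          mul_le_mul_of_nonneg_left hcond3 hs0.le
      _ = (α+β) * M2 := by field_simp
  have hρpos : 0 < ρ := hρ ▸ Real.rpow_pos_of_pos ht _
  have hρ1 : ρ ≤ 1 := hρ ▸ Real.rpow_le_one ht.le ht1 (by positivity)
  refine ⟨⟨hρpos, hρ1⟩, ?_⟩
  -- algebraic identity:  M1 ρ^s - M2 ρ^(α+β) = A
  set A := (α + β - s) / (α + β) * M1 ^ ((α + β) / (α + β - s))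
    * (s / ((α + β) * M2)) ^ (s / (α + β - s)) with hA_def
  have hρs : ρ ^ s = t ^ (s / (α + β - s)) := by
    rw [hρ, ← Real.rpow_mul ht.le]
    congr 1
    field_simp
  have hρab : ρ ^ (α + β) = t ^ (s / (α + β - s)) * t := by
    rw [hρ, ← Real.rpow_mul ht.le]
    have e : 1 / (α + β - s) * (α + β) = s/(α+β-s) + 1 := by
      field_simp
      ring
    rw [e, Real.rpow_add ht, Real.rpow_one]
  have htsplit : t ^ (s/(α+β-s)) = M1 ^ (s/(α+β-s)) * (s / ((α+β)*M2)) ^ (s/(α+β-s)) := by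
    rw [← Real.mul_rpow hM1pos.le (by positivity)]
    congr 1
    rw [ht_def]; ring
  have hkey : M1 * ρ ^ s - M2 * ρ ^ (α + β) = A := by
    have e1 : (α+β)/(α+β-s) = 1 + s/(α+β-s) := by field_simp; ring
    rw [hA_def, hρs, hρab, htsplit, e1, Real.rpow_add hM1pos, Real.rpow_one, ht_def]
    field_simp
  intro u v hu hv hnorm
  set Nu := G.sobNorm Ω (G.bdry Ω) m₁ p u with hNu_def
  set Nv := G.sobNorm Ω (G.bdry Ω) m₂ q v with hNv_def
  have hSu_nn : 0 ≤ ∑ x ∈ Ω ∪ G.bdry Ω, G.gradm m₁ u x ^ p * G.mu x :=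
    Finset.sum_nonneg fun x _ =>
      mul_nonneg (Real.rpow_nonneg (gradm_nonneg' G _ _ _) _) (hμ x).le
  have hSv_nn : 0 ≤ ∑ x ∈ Ω ∪ G.bdry Ω, G.gradm m₂ v x ^ q * G.mu x :=
    Finset.sum_nonneg fun x _ =>
      mul_nonneg (Real.rpow_nonneg (gradm_nonneg' G _ _ _) _) (hμ x).le
  have hNup : Nu ^ p = ∑ x ∈ Ω ∪ G.bdry Ω, G.gradm m₁ u x ^ p * G.mu x :=
    rpow_one_div_rpow' hSu_nn hp0.ne'
  have hNvq : Nv ^ q = ∑ x ∈ Ω ∪ G.bdry Ω, G.gradm m₂ v x ^ q * G.mu x :=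
    rpow_one_div_rpow' hSv_nn hq0.ne'
  have hNu_nn : 0 ≤ Nu := Real.rpow_nonneg hSu_nn _
  have hNv_nn : 0 ≤ Nv := Real.rpow_nonneg hSv_nn _
  have hNuρ : Nu ≤ ρ := by linarith
  have hNvρ : Nv ≤ ρ := by linarith
  have hLu : ∀ r : ℝ, 1 ≤ r → ∑ x ∈ Ω, |u x| ^ r * G.mu x ≤ C₁ ^ r * Nu ^ r := by
    intro r hr
    have hr0 : (0:ℝ) < r := lt_of_lt_of_le one_pos hr
    have h0 : 0 ≤ ∑ x ∈ Ω, |u x| ^ r * G.mu x :=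
      Finset.sum_nonneg fun x _ =>
        mul_nonneg (Real.rpow_nonneg (abs_nonneg _) _) (hμ x).le
    have h2 : (G.lpNorm Ω r u) ^ r ≤ (C₁ * Nu) ^ r :=
      Real.rpow_le_rpow (Real.rpow_nonneg h0 _) (hemb₁ r hr u hu) hr0.le
    rw [Real.mul_rpow hC₁.le hNu_nn] at h2
    calc ∑ x ∈ Ω, |u x| ^ r * G.mu x = (G.lpNorm Ω r u) ^ r :=
          (rpow_one_div_rpow' h0 hr0.ne').symm
      _ ≤ C₁ ^ r * Nu ^ r := h2
  have hLv : ∀ r : ℝ, 1 ≤ r → ∑ x ∈ Ω, |v x| ^ r * G.mu x ≤ C₂ ^ r * Nv ^ r := by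
    intro r hr
    have hr0 : (0:ℝ) < r := lt_of_lt_of_le one_pos hr
    have h0 : 0 ≤ ∑ x ∈ Ω, |v x| ^ r * G.mu x :=
      Finset.sum_nonneg fun x _ =>
        mul_nonneg (Real.rpow_nonneg (abs_nonneg _) _) (hμ x).le
    have h2 : (G.lpNorm Ω r v) ^ r ≤ (C₂ * Nv) ^ r :=
      Real.rpow_le_rpow (Real.rpow_nonneg h0 _) (hemb₂ r hr v hv) hr0.le
    rw [Real.mul_rpow hC₂.le hNv_nn] at h2
    calc ∑ x ∈ Ω, |v x| ^ r * G.mu x = (G.lpNorm Ω r v) ^ r :=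
          (rpow_one_div_rpow' h0 hr0.ne').symm
      _ ≤ C₂ ^ r * Nv ^ r := h2
  -- h₁-term bound via pointwise Young
  set Hp₁ := G.lpNorm Ω (p / (p - γ₁)) h₁ ^ (p / (p - γ₁)) with hHp₁_def
  set Hp₂ := G.lpNorm Ω (q / (q - γ₂)) h₂ ^ (q / (q - γ₂)) with hHp₂_def
  have hHp₁ : Hp₁ = ∑ x ∈ Ω, |h₁ x| ^ (p/(p-γ₁)) * G.mu x := by
    rw [hHp₁_def]
    exact rpow_one_div_rpow'
      (Finset.sum_nonneg fun x _ =>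
        mul_nonneg (Real.rpow_nonneg (abs_nonneg _) _) (hμ x).le)
      (div_pos hp0 (sub_pos.2 hγ₁p)).ne'
  have hHp₂ : Hp₂ = ∑ x ∈ Ω, |h₂ x| ^ (q/(q-γ₂)) * G.mu x := by
    rw [hHp₂_def]
    exact rpow_one_div_rpow'
      (Finset.sum_nonneg fun x _ =>
        mul_nonneg (Real.rpow_nonneg (abs_nonneg _) _) (hμ x).le)
      (div_pos hq0 (sub_pos.2 hγ₂q)).ne'
  have hconj₁ : (p/γ₁).HolderConjugate (p/(p-γ₁)) := by
    constructor
    · rw [inv_div, inv_div, ← add_div]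
      field_simp
      ring
    · exact div_pos hp0 hγ₁0
    · exact div_pos hp0 (sub_pos.2 hγ₁p)
  have hconj₂ : (q/γ₂).HolderConjugate (q/(q-γ₂)) := by
    constructor
    · rw [inv_div, inv_div, ← add_div]
      field_simp
      ring
    · exact div_pos hq0 hγ₂0
    · exact div_pos hq0 (sub_pos.2 hγ₂q)
  have hI₁ : ∑ x ∈ Ω, h₁ x * |u x| ^ γ₁ * G.mu x ≤
      γ₁/p * (C₁ ^ p * Nu ^ p) + (p-γ₁)/p * Hp₁ := by
    have step : ∑ x ∈ Ω, h₁ x * |u x| ^ γ₁ * G.mu x ≤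
        ∑ x ∈ Ω, (γ₁/p * |u x| ^ p + (p-γ₁)/p * |h₁ x| ^ (p/(p-γ₁))) * G.mu x := by
      apply Finset.sum_le_sum
      intro x hx
      apply mul_le_mul_of_nonneg_right _ (hμ x).le
      have hy := Real.young_inequality_of_nonneg
        (Real.rpow_nonneg (abs_nonneg (u x)) γ₁) (abs_nonneg (h₁ x)) hconj₁
      rw [← Real.rpow_mul (abs_nonneg (u x))] at hy
      have hg : γ₁ * (p/γ₁) = p := by field_simp
      rw [hg] at hy
      calc h₁ x * |u x| ^ γ₁ = |u x| ^ γ₁ * |h₁ x| := by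
            rw [abs_of_pos (hh₁ x hx)]; ring
        _ ≤ |u x| ^ p / (p/γ₁) + |h₁ x| ^ (p/(p-γ₁)) / (p/(p-γ₁)) := hy
        _ = γ₁/p * |u x| ^ p + (p-γ₁)/p * |h₁ x| ^ (p/(p-γ₁)) := by
            rw [div_div_eq_mul_div, div_div_eq_mul_div]; ring
    have split : ∑ x ∈ Ω, (γ₁/p * |u x| ^ p + (p-γ₁)/p * |h₁ x| ^ (p/(p-γ₁))) * G.mu x
        = γ₁/p * ∑ x ∈ Ω, |u x| ^ p * G.mu x
          + (p-γ₁)/p * ∑ x ∈ Ω, |h₁ x| ^ (p/(p-γ₁)) * G.mu x := by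
      rw [Finset.mul_sum, Finset.mul_sum, ← Finset.sum_add_distrib]
      exact Finset.sum_congr rfl fun x _ => by ring
    rw [split] at step
    rw [hHp₁]
    refine le_trans step (add_le_add_left
      (mul_le_mul_of_nonneg_left (hLu p hp.le) (by positivity)) _)
  have hI₂ : ∑ x ∈ Ω, h₂ x * |v x| ^ γ₂ * G.mu x ≤
      γ₂/q * (C₂ ^ q * Nv ^ q) + (q-γ₂)/q * Hp₂ := by
    have step : ∑ x ∈ Ω, h₂ x * |v x| ^ γ₂ * G.mu x ≤
        ∑ x ∈ Ω, (γ₂/q * |v x| ^ q + (q-γ₂)/q * |h₂ x| ^ (q/(q-γ₂))) * G.mu x := by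
      apply Finset.sum_le_sum
      intro x hx
      apply mul_le_mul_of_nonneg_right _ (hμ x).le
      have hy := Real.young_inequality_of_nonneg
        (Real.rpow_nonneg (abs_nonneg (v x)) γ₂) (abs_nonneg (h₂ x)) hconj₂
      rw [← Real.rpow_mul (abs_nonneg (v x))] at hy
      have hg : γ₂ * (q/γ₂) = q := by field_simp
      rw [hg] at hy
      calc h₂ x * |v x| ^ γ₂ = |v x| ^ γ₂ * |h₂ x| := by
            rw [abs_of_pos (hh₂ x hx)]; ring
        _ ≤ |v x| ^ q / (q/γ₂) + |h₂ x| ^ (q/(q-γ₂)) / (q/(q-γ₂)) := hy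
        _ = γ₂/q * |v x| ^ q + (q-γ₂)/q * |h₂ x| ^ (q/(q-γ₂)) := by
            rw [div_div_eq_mul_div, div_div_eq_mul_div]; ring
    have split : ∑ x ∈ Ω, (γ₂/q * |v x| ^ q + (q-γ₂)/q * |h₂ x| ^ (q/(q-γ₂))) * G.mu x
        = γ₂/q * ∑ x ∈ Ω, |v x| ^ q * G.mu x
          + (q-γ₂)/q * ∑ x ∈ Ω, |h₂ x| ^ (q/(q-γ₂)) * G.mu x := by
      rw [Finset.mul_sum, Finset.mul_sum, ← Finset.sum_add_distrib]
      exact Finset.sum_congr rfl fun x _ => by ring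
    rw [split] at step
    rw [hHp₂]
    refine le_trans step (add_le_add_left
      (mul_le_mul_of_nonneg_left (hLv q hq.le) (by positivity)) _)
  -- cross term bound
  have hI₃ : ∑ x ∈ Ω, c x * |u x| ^ α * |v x| ^ β * G.mu x ≤ (α+β) * M2 * ρ ^ (α+β) := by
    have hwsum : α/(α+β) + β/(α+β) = 1 := by field_simp
    have step : ∑ x ∈ Ω, c x * |u x| ^ α * |v x| ^ β * G.mu x ≤
        ∑ x ∈ Ω, C₀ * (α/(α+β) * |u x| ^ (α+β) + β/(α+β) * |v x| ^ (α+β)) * G.mu x := by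
      apply Finset.sum_le_sum
      intro x hx
      apply mul_le_mul_of_nonneg_right _ (hμ x).le
      have hgm := Real.geom_mean_le_arith_mean2_weighted
        (by positivity : (0:ℝ) ≤ α/(α+β)) (by positivity : (0:ℝ) ≤ β/(α+β))
        (Real.rpow_nonneg (abs_nonneg (u x)) (α+β))
        (Real.rpow_nonneg (abs_nonneg (v x)) (α+β)) hwsum
      rw [← Real.rpow_mul (abs_nonneg (u x)), ← Real.rpow_mul (abs_nonneg (v x))] at hgm
      have e1 : (α+β) * (α/(α+β)) = α := by field_simp
      have e2 : (α+β) * (β/(α+β)) = β := by field_simp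
      rw [e1, e2] at hgm
      have hcx : c x ≤ C₀ := hC₀ ▸ Finset.le_sup' c hx
      calc c x * |u x| ^ α * |v x| ^ β = c x * (|u x| ^ α * |v x| ^ β) := by ring
        _ ≤ C₀ * (α/(α+β) * |u x| ^ (α+β) + β/(α+β) * |v x| ^ (α+β)) :=
            mul_le_mul hcx hgm (by positivity) hC₀pos.le
    have split : ∑ x ∈ Ω, C₀ * (α/(α+β) * |u x| ^ (α+β) + β/(α+β) * |v x| ^ (α+β)) * G.mu x
        = C₀ * (α/(α+β)) * ∑ x ∈ Ω, |u x| ^ (α+β) * G.mu x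
          + C₀ * (β/(α+β)) * ∑ x ∈ Ω, |v x| ^ (α+β) * G.mu x := by
      rw [Finset.mul_sum, Finset.mul_sum, ← Finset.sum_add_distrib]
      exact Finset.sum_congr rfl fun x _ => by ring
    have hab1 : (1:ℝ) ≤ α + β := le_trans hs1.le hpqαβ.le
    have hUab : ∑ x ∈ Ω, |u x| ^ (α+β) * G.mu x ≤ C₁ ^ (α+β) * ρ ^ (α+β) := by
      refine le_trans (hLu (α+β) hab1) ?_
      exact mul_le_mul_of_nonneg_left (Real.rpow_le_rpow hNu_nn hNuρ hab.le)
        (Real.rpow_pos_of_pos hC₁ _).le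
    have hVab : ∑ x ∈ Ω, |v x| ^ (α+β) * G.mu x ≤ C₂ ^ (α+β) * ρ ^ (α+β) := by
      refine le_trans (hLv (α+β) hab1) ?_
      exact mul_le_mul_of_nonneg_left (Real.rpow_le_rpow hNv_nn hNvρ hab.le)
        (Real.rpow_pos_of_pos hC₂ _).le
    have hfin : C₀ * (α/(α+β)) * (C₁ ^ (α+β) * ρ ^ (α+β))
        + C₀ * (β/(α+β)) * (C₂ ^ (α+β) * ρ ^ (α+β)) = (α+β) * M2 * ρ ^ (α+β) := by
      rw [hM2]; field_simp
    calc ∑ x ∈ Ω, c x * |u x| ^ α * |v x| ^ β * G.mu x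
        ≤ C₀ * (α/(α+β)) * ∑ x ∈ Ω, |u x| ^ (α+β) * G.mu x
          + C₀ * (β/(α+β)) * ∑ x ∈ Ω, |v x| ^ (α+β) * G.mu x := by
          rw [← split]; exact step
      _ ≤ C₀ * (α/(α+β)) * (C₁ ^ (α+β) * ρ ^ (α+β))
          + C₀ * (β/(α+β)) * (C₂ ^ (α+β) * ρ ^ (α+β)) := by
          have c1 : (0:ℝ) ≤ C₀ * (α/(α+β)) := by positivity
          have c2 : (0:ℝ) ≤ C₀ * (β/(α+β)) := by positivity
          exact add_le_add (mul_le_mul_of_nonneg_left hUab c1)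
            (mul_le_mul_of_nonneg_left hVab c2)
      _ = (α+β) * M2 * ρ ^ (α+β) := hfin
  -- main coercive bound
  have hNu1 : Nu ≤ 1 := le_trans hNuρ hρ1
  have hNv1 : Nv ≤ 1 := le_trans hNvρ hρ1
  have hNus : Nu ^ s ≤ Nu ^ p := by
    rcases eq_or_lt_of_le hNu_nn with h | h
    · rw [← h, Real.zero_rpow hs0.ne', Real.zero_rpow hp0.ne']
    · exact Real.rpow_le_rpow_of_exponent_ge h hNu1 (le_max_left p q)
  have hNvs : Nv ^ s ≤ Nv ^ q := by
    rcases eq_or_lt_of_le hNv_nn with h | h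
    · rw [← h, Real.zero_rpow hs0.ne', Real.zero_rpow hq0.ne']
    · exact Real.rpow_le_rpow_of_exponent_ge h hNv1 (le_max_right p q)
  have hmain : M1 * ρ ^ s ≤ (1 - lam₁ * C₁ ^ p)/p * Nu ^ p + (1 - lam₂ * C₂ ^ q)/q * Nv ^ q := by
    have h2 : (2:ℝ) ^ (1-s) * (Nu + Nv) ^ s ≤ Nu ^ s + Nv ^ s :=
      two_rpow_helper' hNu_nn hNv_nn hs1.le
    have hstep : M1 * ρ ^ s ≤ mm * (Nu ^ s + Nv ^ s) := by
      rw [hM1, ← hnorm]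
      calc 2 ^ (1-s) * mm * (Nu + Nv) ^ s = mm * (2 ^ (1-s) * (Nu + Nv) ^ s) := by ring
        _ ≤ mm * (Nu ^ s + Nv ^ s) := mul_le_mul_of_nonneg_left h2 hmm.le
    refine le_trans hstep ?_
    have l1 : mm * Nu ^ s ≤ (1 - lam₁ * C₁ ^ p)/p * Nu ^ p :=
      mul_le_mul (min_le_left _ _) hNus (Real.rpow_nonneg hNu_nn _)
        (div_pos (sub_pos.2 h1p) hp0).le
    have l2 : mm * Nv ^ s ≤ (1 - lam₂ * C₂ ^ q)/q * Nv ^ q :=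
      mul_le_mul (min_le_right _ _) hNvs (Real.rpow_nonneg hNv_nn _)
        (div_pos (sub_pos.2 h1q) hq0).le
    calc mm * (Nu ^ s + Nv ^ s) = mm * Nu ^ s + mm * Nv ^ s := by ring
      _ ≤ _ := add_le_add l1 l2
  -- assemble
  show 0 < (1 / p) * G.integral (Ω ∪ G.bdry Ω) (fun x => G.gradm m₁ u x ^ p)
    - (lam₁ / γ₁) * G.integral Ω (fun x => h₁ x * |u x| ^ γ₁)
    + (1 / q) * G.integral (Ω ∪ G.bdry Ω) (fun x => G.gradm m₂ v x ^ q)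
    - (lam₂ / γ₂) * G.integral Ω (fun x => h₂ x * |v x| ^ γ₂)
    - (1 / (α + β)) * G.integral Ω (fun x => c x * |u x| ^ α * |v x| ^ β)
  unfold GraphSetting.integral
  rw [← hNup, ← hNvq]
  have b₁ : (lam₁ / γ₁) * ∑ x ∈ Ω, h₁ x * |u x| ^ γ₁ * G.mu x ≤
      lam₁/p * (C₁ ^ p * Nu ^ p) + lam₁ * (p-γ₁)/(p*γ₁) * Hp₁ := by
    have e : lam₁/γ₁ * (γ₁/p * (C₁ ^ p * Nu ^ p) + (p-γ₁)/p * Hp₁)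
        = lam₁/p * (C₁ ^ p * Nu ^ p) + lam₁ * (p-γ₁)/(p*γ₁) * Hp₁ := by
      field_simp
    rw [← e]
    exact mul_le_mul_of_nonneg_left hI₁ (by positivity)
  have b₂ : (lam₂ / γ₂) * ∑ x ∈ Ω, h₂ x * |v x| ^ γ₂ * G.mu x ≤
      lam₂/q * (C₂ ^ q * Nv ^ q) + lam₂ * (q-γ₂)/(q*γ₂) * Hp₂ := by
    have e : lam₂/γ₂ * (γ₂/q * (C₂ ^ q * Nv ^ q) + (q-γ₂)/q * Hp₂)
        = lam₂/q * (C₂ ^ q * Nv ^ q) + lam₂ * (q-γ₂)/(q*γ₂) * Hp₂ := by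
      field_simp
    rw [← e]
    exact mul_le_mul_of_nonneg_left hI₂ (by positivity)
  have b₃ : (1/(α+β)) * ∑ x ∈ Ω, c x * |u x| ^ α * |v x| ^ β * G.mu x ≤ M2 * ρ ^ (α+β) := by
    have := mul_le_mul_of_nonneg_left hI₃ (by positivity : (0:ℝ) ≤ 1/(α+β))
    calc (1/(α+β)) * ∑ x ∈ Ω, c x * |u x| ^ α * |v x| ^ β * G.mu x
        ≤ (1/(α+β)) * ((α+β) * M2 * ρ ^ (α+β)) := this
      _ = M2 * ρ ^ (α+β) := by field_simp
  have e₁ : (1/p) * Nu ^ p - lam₁/p * (C₁ ^ p * Nu ^ p) = (1 - lam₁ * C₁ ^ p)/p * Nu ^ p := by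
    ring
  have e₂ : (1/q) * Nv ^ q - lam₂/q * (C₂ ^ q * Nv ^ q) = (1 - lam₂ * C₂ ^ q)/q * Nv ^ q := by
    ring
  linarith [hcond4, hkey, hmain, b₁, b₂, b₃]
end

section
/- If λ ∈ (0, λ⋆), then for every nonzero u ∈ W_0^{m,p}(Ω), setting t₀ = (‖u‖_{W_0^{m,p}(Ω)}^p / ∫_Ω c|u|^α dμ)^{1/(α−p)}, the fibering map G_u(t) = (t^p/p)‖u‖_{W_0^{m,p}(Ω)}^p − (λt^γ/γ)∫_Ω h|u|^γ dμ − (t^α/α)∫_Ω c|u|^α dμ satisfies G_u(t₀) > 0. -/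
open Finset Filter

/-- Inequality (4.12): for `λ ∈ (0, λ⋆)` the fibering map `G_u` is positive at `t₀`. -/
theorem fibering_map_positive_at_t0
    {V : Type} [DecidableEq V] (G : GraphSetting V)
    (Ω : Finset V) (hΩ : Ω.Nonempty) (hbΩ : (G.bdry Ω).Nonempty)
    (m : ℕ) (hm : 0 < m)
    (p γ lam α : ℝ) (hγ : 1 < γ) (hγp : γ < p) (hpα : p < α)
    (h c : V → ℝ) (hh : ∀ x ∈ Ω, 0 < h x) (hc : ∀ x ∈ Ω, 0 < c x)
    (Cmp : ℝ) (hCmp : 0 < Cmp)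
    (hemb : ∀ r : ℝ, 1 ≤ r → ∀ u : V → ℝ, suppIn Ω u →
      G.lpNorm Ω r u ≤ Cmp * G.sobNorm Ω (G.bdry Ω) m p u)
    (H₀ C₀ lamS : ℝ) (hH₀ : H₀ = Ω.sup' hΩ h) (hC₀ : C₀ = Ω.sup' hΩ c)
    (hlamS : lamS = γ * (α - p) / (p * α * H₀ * Cmp ^ γ) * (C₀ * Cmp ^ α) ^ ((p - γ) / (p - α)))
    (hlam : 0 < lam) (hlam' : lam < lamS)
    :
    ∀ u : V → ℝ, suppIn Ω u → u ≠ 0 →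
      ∀ nu Ih Ic t₀ : ℝ,
        nu = G.sobNorm Ω (G.bdry Ω) m p u →
        Ih = G.integral Ω (fun x => h x * |u x| ^ γ) →
        Ic = G.integral Ω (fun x => c x * |u x| ^ α) →
        t₀ = (nu ^ p / Ic) ^ (1 / (α - p)) →
        0 < t₀ ^ p / p * nu ^ p - lam * t₀ ^ γ / γ * Ih - t₀ ^ α / α * Ic := by
  intro u hsupp hune nu Ih Ic t₀ hnu hIh hIc ht₀
  obtain ⟨μ₀, hμ₀, hμb⟩ := G.mu_bound
  have hμ : ∀ x, 0 < G.mu x := fun x => lt_of_lt_of_le hμ₀ (hμb x)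
  obtain ⟨x₀, hx₀⟩ : ∃ x, u x ≠ 0 := Function.ne_iff.mp hune
  have hx₀Ω : x₀ ∈ Ω := by
    by_contra hx
    exact hx₀ (hsupp x₀ hx)
  have habs : 0 < |u x₀| := abs_pos.mpr hx₀
  have hγ0 : (0:ℝ) < γ := lt_trans one_pos hγ
  have hp0 : (0:ℝ) < p := lt_trans hγ0 hγp
  have hα0 : (0:ℝ) < α := lt_trans hp0 hpα
  have hH₀0 : 0 < H₀ := lt_of_lt_of_le (hh x₀ hx₀Ω) (hH₀ ▸ Finset.le_sup' h hx₀Ω)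
  have hC₀0 : 0 < C₀ := lt_of_lt_of_le (hc x₀ hx₀Ω) (hC₀ ▸ Finset.le_sup' c hx₀Ω)
  -- positivity of sums
  have hsum : ∀ r : ℝ, 0 < ∑ x ∈ Ω, |u x| ^ r * G.mu x := by
    intro r
    apply Finset.sum_pos'
    · intro x _; exact mul_nonneg (Real.rpow_nonneg (abs_nonneg _) r) (hμ x).le
    · exact ⟨x₀, hx₀Ω, mul_pos (Real.rpow_pos_of_pos habs r) (hμ x₀)⟩
  have hIh0 : 0 < Ih := by
    rw [hIh]
    unfold GraphSetting.integral
    apply Finset.sum_pos'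
    · intro x hx
      exact mul_nonneg (mul_nonneg (hh x hx).le (Real.rpow_nonneg (abs_nonneg _) γ)) (hμ x).le
    · exact ⟨x₀, hx₀Ω,
        mul_pos (mul_pos (hh x₀ hx₀Ω) (Real.rpow_pos_of_pos habs γ)) (hμ x₀)⟩
  have hIc0 : 0 < Ic := by
    rw [hIc]
    unfold GraphSetting.integral
    apply Finset.sum_pos'
    · intro x hx
      exact mul_nonneg (mul_nonneg (hc x hx).le (Real.rpow_nonneg (abs_nonneg _) α)) (hμ x).le
    · exact ⟨x₀, hx₀Ω,
        mul_pos (mul_pos (hc x₀ hx₀Ω) (Real.rpow_pos_of_pos habs α)) (hμ x₀)⟩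
  -- nu > 0
  have hnu0 : 0 < nu := by
    have h1 := hemb γ hγ.le u hsupp
    rw [← hnu] at h1
    have h2 : 0 < G.lpNorm Ω γ u := by
      unfold GraphSetting.lpNorm
      exact Real.rpow_pos_of_pos (hsum γ) _
    nlinarith
  -- L^r bound on the sum
  have hLbound : ∀ r : ℝ, 1 ≤ r → (∑ x ∈ Ω, |u x| ^ r * G.mu x) ≤ (Cmp * nu) ^ r := by
    intro r hr
    have hr0 : (0:ℝ) < r := lt_of_lt_of_le one_pos hr
    have h1 := hemb r hr u hsupp
    rw [← hnu] at h1
    have h2 : G.lpNorm Ω r u ^ r ≤ (Cmp * nu) ^ r := by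
      apply Real.rpow_le_rpow _ h1 hr0.le
      unfold GraphSetting.lpNorm
      exact Real.rpow_nonneg (hsum r).le _
    unfold GraphSetting.lpNorm at h2
    rwa [← Real.rpow_mul (hsum r).le, one_div, inv_mul_cancel₀ hr0.ne', Real.rpow_one] at h2
  have hIhb : Ih ≤ H₀ * (Cmp * nu) ^ γ := by
    have step1 : Ih ≤ H₀ * ∑ x ∈ Ω, |u x| ^ γ * G.mu x := by
      rw [hIh]
      unfold GraphSetting.integral
      rw [Finset.mul_sum]
      apply Finset.sum_le_sum
      intro x hx
      have hxH : h x ≤ H₀ := hH₀ ▸ Finset.le_sup' h hx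
      have hnn : 0 ≤ |u x| ^ γ * G.mu x :=
        mul_nonneg (Real.rpow_nonneg (abs_nonneg _) γ) (hμ x).le
      calc h x * |u x| ^ γ * G.mu x = h x * (|u x| ^ γ * G.mu x) := by ring
        _ ≤ H₀ * (|u x| ^ γ * G.mu x) := mul_le_mul_of_nonneg_right hxH hnn
    calc Ih ≤ H₀ * ∑ x ∈ Ω, |u x| ^ γ * G.mu x := step1
      _ ≤ H₀ * (Cmp * nu) ^ γ :=
        mul_le_mul_of_nonneg_left (hLbound γ hγ.le) hH₀0.le
  have hIcb : Ic ≤ C₀ * (Cmp * nu) ^ α := by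
    have step1 : Ic ≤ C₀ * ∑ x ∈ Ω, |u x| ^ α * G.mu x := by
      rw [hIc]
      unfold GraphSetting.integral
      rw [Finset.mul_sum]
      apply Finset.sum_le_sum
      intro x hx
      have hxC : c x ≤ C₀ := hC₀ ▸ Finset.le_sup' c hx
      have hnn : 0 ≤ |u x| ^ α * G.mu x :=
        mul_nonneg (Real.rpow_nonneg (abs_nonneg _) α) (hμ x).le
      calc c x * |u x| ^ α * G.mu x = c x * (|u x| ^ α * G.mu x) := by ring
        _ ≤ C₀ * (|u x| ^ α * G.mu x) := mul_le_mul_of_nonneg_right hxC hnn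
    calc Ic ≤ C₀ * ∑ x ∈ Ω, |u x| ^ α * G.mu x := step1
      _ ≤ C₀ * (Cmp * nu) ^ α :=
        mul_le_mul_of_nonneg_left (hLbound α (by linarith)) hC₀0.le
  -- algebra with t₀
  set e : ℝ := α - p with he
  have he0 : (0:ℝ) < e := by rw [he]; linarith
  have hpe : α = p + e := by rw [he]; ring
  have hR0 : 0 < nu ^ p / Ic := div_pos (Real.rpow_pos_of_pos hnu0 p) hIc0
  have ht₀0 : 0 < t₀ := by
    rw [ht₀]
    exact Real.rpow_pos_of_pos hR0 _
  have hte : t₀ ^ e = nu ^ p / Ic := by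
    rw [ht₀, ← Real.rpow_mul hR0.le, one_div, inv_mul_cancel₀ he0.ne', Real.rpow_one]
  have h1 : t₀ ^ α * Ic = t₀ ^ p * nu ^ p := by
    rw [hpe, Real.rpow_add ht₀0, hte, mul_assoc, div_mul_cancel₀ _ hIc0.ne']
  set D : ℝ := C₀ * Cmp ^ α with hD
  have hD0 : 0 < D := mul_pos hC₀0 (Real.rpow_pos_of_pos hCmp α)
  have hIcD : Ic ≤ D * nu ^ α := by
    calc Ic ≤ C₀ * (Cmp * nu) ^ α := hIcb
      _ = D * nu ^ α := by rw [Real.mul_rpow hCmp.le hnu0.le, hD]; ring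
  set e2 : ℝ := (p - γ) / e with he2
  have he20 : (0:ℝ) < e2 := div_pos (by linarith) he0
  have hK : D ^ ((p - γ) / (p - α)) ≤ (t₀ * nu) ^ (p - γ) := by
    have hKeq : D ^ ((p - γ) / (p - α)) = (D⁻¹) ^ e2 := by
      rw [Real.inv_rpow hD0.le, ← Real.rpow_neg hD0.le]
      congr 1
      rw [he2, he]
      rw [← div_neg]
      congr 1
      ring
    have htn : t₀ * nu = (nu ^ α / Ic) ^ (1 / e) := by
      have hnua : nu ^ α = nu ^ p * nu ^ e := by
        rw [← Real.rpow_add hnu0, ← hpe]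
      have h2 : nu ^ α / Ic = (nu ^ p / Ic) * nu ^ e := by rw [hnua]; ring
      rw [ht₀, h2, Real.mul_rpow hR0.le (Real.rpow_nonneg hnu0.le e)]
      congr 1
      rw [← Real.rpow_mul hnu0.le, mul_one_div, div_self he0.ne', Real.rpow_one]
    have h3 : (t₀ * nu) ^ (p - γ) = (nu ^ α / Ic) ^ e2 := by
      rw [htn, ← Real.rpow_mul (div_nonneg (Real.rpow_nonneg hnu0.le α) hIc0.le), he2]
      congr 1
      ring
    have h4 : D⁻¹ ≤ nu ^ α / Ic := by
      rw [inv_eq_one_div, div_le_div_iff₀ hD0 hIc0]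
      nlinarith [hIcD]
    calc D ^ ((p - γ) / (p - α)) = (D⁻¹) ^ e2 := hKeq
      _ ≤ (nu ^ α / Ic) ^ e2 :=
        Real.rpow_le_rpow (inv_nonneg.mpr hD0.le) h4 he20.le
      _ = (t₀ * nu) ^ (p - γ) := h3.symm
  -- key inequality
  have hA0 : (0:ℝ) < γ * ((α - p) / (p * α)) :=
    mul_pos hγ0 (div_pos (by linarith) (mul_pos hp0 hα0))
  have hkey : lam * Ih < γ * ((α - p) / (p * α)) * (t₀ ^ (p - γ) * nu ^ p) := by
    have hq0 : 0 < H₀ * (Cmp * nu) ^ γ :=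
      mul_pos hH₀0 (Real.rpow_pos_of_pos (mul_pos hCmp hnu0) γ)
    have hCγ0 : (0:ℝ) < Cmp ^ γ := Real.rpow_pos_of_pos hCmp γ
    have b3 : lamS * (H₀ * (Cmp * nu) ^ γ) =
        γ * ((α - p) / (p * α)) * (D ^ ((p - γ) / (p - α)) * nu ^ γ) := by
      rw [hlamS, Real.mul_rpow hCmp.le hnu0.le]
      field_simp
      ring
    have b4 : D ^ ((p - γ) / (p - α)) * nu ^ γ ≤ t₀ ^ (p - γ) * nu ^ p := by
      have hm2 := mul_le_mul_of_nonneg_right hK (Real.rpow_nonneg hnu0.le γ)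
      have hpg : p - γ + γ = p := by ring
      calc D ^ ((p - γ) / (p - α)) * nu ^ γ ≤ (t₀ * nu) ^ (p - γ) * nu ^ γ := hm2
        _ = t₀ ^ (p - γ) * (nu ^ (p - γ) * nu ^ γ) := by
            rw [Real.mul_rpow ht₀0.le hnu0.le]; ring
        _ = t₀ ^ (p - γ) * nu ^ p := by rw [← Real.rpow_add hnu0, hpg]
    calc lam * Ih ≤ lam * (H₀ * (Cmp * nu) ^ γ) := mul_le_mul_of_nonneg_left hIhb hlam.le
      _ < lamS * (H₀ * (Cmp * nu) ^ γ) := mul_lt_mul_of_pos_right hlam' hq0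
      _ = γ * ((α - p) / (p * α)) * (D ^ ((p - γ) / (p - α)) * nu ^ γ) := b3
      _ ≤ γ * ((α - p) / (p * α)) * (t₀ ^ (p - γ) * nu ^ p) :=
          mul_le_mul_of_nonneg_left b4 hA0.le
  have hkey2 : lam * t₀ ^ γ / γ * Ih < (α - p) / (p * α) * (t₀ ^ p * nu ^ p) := by
    have hfac : (0:ℝ) < t₀ ^ γ / γ := div_pos (Real.rpow_pos_of_pos ht₀0 γ) hγ0
    have hm3 := mul_lt_mul_of_pos_left hkey hfac
    have htp : t₀ ^ γ * t₀ ^ (p - γ) = t₀ ^ p := by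
      rw [← Real.rpow_add ht₀0]
      congr 1
      ring
    calc lam * t₀ ^ γ / γ * Ih = t₀ ^ γ / γ * (lam * Ih) := by ring
      _ < t₀ ^ γ / γ * (γ * ((α - p) / (p * α)) * (t₀ ^ (p - γ) * nu ^ p)) := hm3
      _ = (α - p) / (p * α) * (t₀ ^ γ * t₀ ^ (p - γ) * nu ^ p) := by
          field_simp
      _ = (α - p) / (p * α) * (t₀ ^ p * nu ^ p) := by rw [htp]
  have hTa : t₀ ^ α / α * Ic = t₀ ^ p * nu ^ p / α := by
    rw [div_mul_eq_mul_div, h1]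
  have hsplit : t₀ ^ p / p * nu ^ p - t₀ ^ p * nu ^ p / α =
      (α - p) / (p * α) * (t₀ ^ p * nu ^ p) := by
    field_simp
  linarith
end
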